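/- arXiv:1608.00904 — 2 statements merged into one kernel-verified Lean document; each statement's English description precedes it below -/
import Mathlib

section
/- If G is a connected graph, then W_def(G) ≤ 1 + def(G) + (diam(G) + 1)(Δ(G) − 1). -/
open scoped Classical

/-- A proper edge-coloring: distinct edges sharing a vertex receive distinct colors. -/
def IsProperEdgeColoring {V : Type*} (G : SimpleGraph V) (c : Sym2 V → ℕ) : Prop :=
  ∀ e ∈ G.edgeSet, ∀ e' ∈ G.edgeSet, e ≠ e' → (∃ v, v ∈ e ∧ v ∈ e') → c e ≠ c e'

/-- A proper `t`-edge-coloring: proper, colors lie in `{1,…,t}`, and all colors are used. -/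
def IsProperTEdgeColoring {V : Type*} (G : SimpleGraph V) (t : ℕ) (c : Sym2 V → ℕ) : Prop :=
  IsProperEdgeColoring G c ∧ (∀ e ∈ G.edgeSet, c e ∈ Finset.Icc 1 t) ∧
    ∀ k ∈ Finset.Icc 1 t, ∃ e ∈ G.edgeSet, c e = k

/-- The vSpectrum of a vertex: the set of colors appearing on edges incident to `v`. -/
noncomputable def vSpectrum {V : Type*} [Fintype V] (G : SimpleGraph V) (c : Sym2 V → ℕ)
    (v : V) : Finset ℕ :=
  (Finset.univ.filter (fun u => G.Adj v u)).image (fun u => c s(v, u))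

/-- The deficiency of a finite set of naturals: `max S − min S − |S| + 1`. -/
def setDef (S : Finset ℕ) : ℕ := (S.max.getD 0 - S.min.getD 0) - (S.card - 1)

/-- The deficiency of a proper edge-coloring: the sum of vertex deficiencies. -/
noncomputable def colDef {V : Type*} [Fintype V] (G : SimpleGraph V) (c : Sym2 V → ℕ) : ℕ :=
  ∑ v, setDef (vSpectrum G c v)

/-- The deficiency of a graph: the minimum deficiency over all proper edge-colorings. -/
noncomputable def graphDef {V : Type*} [Fintype V] (G : SimpleGraph V) : ℕ :=
  sInf {d | ∃ c, IsProperEdgeColoring G c ∧ colDef G c = d}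

/-- `w_def G`: the least `t` such that some proper `t`-edge-coloring attains `def(G)`. -/
noncomputable def wdef {V : Type*} [Fintype V] (G : SimpleGraph V) : ℕ :=
  sInf {t | ∃ c, IsProperTEdgeColoring G t c ∧ colDef G c = graphDef G}

/-- `W_def G`: the greatest `t` such that some proper `t`-edge-coloring attains `def(G)`. -/
noncomputable def Wdef {V : Type*} [Fintype V] (G : SimpleGraph V) : ℕ :=
  sSup {t | ∃ c, IsProperTEdgeColoring G t c ∧ colDef G c = graphDef G}

/-- A graph is interval colorable if some proper edge-coloring has deficiency `0`. -/
def IntervalColorable {V : Type*} [Fintype V] (G : SimpleGraph V) : Prop :=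
  ∃ c, IsProperEdgeColoring G c ∧ colDef G c = 0

/-- `w G`: the least `t` such that `G` has an interval `t`-coloring. -/
noncomputable def wint {V : Type*} [Fintype V] (G : SimpleGraph V) : ℕ :=
  sInf {t | ∃ c, IsProperTEdgeColoring G t c ∧ colDef G c = 0}

/-- `W G`: the greatest `t` such that `G` has an interval `t`-coloring. -/
noncomputable def Wint {V : Type*} [Fintype V] (G : SimpleGraph V) : ℕ :=
  sSup {t | ∃ c, IsProperTEdgeColoring G t c ∧ colDef G c = 0}

/-!
Take an optimal coloring with colors `1, …, t`, an edge colored `1` at a vertex `x`, an edge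
colored `t` at a vertex `y`, and a shortest path `x = v₀, …, v_k = y`, so `k ≤ diam G`. Any two
colors at a vertex `v` differ by at most `|S(v)| - 1 + def(v) ≤ Δ - 1 + def(v)`, and consecutive
vertices of the path share the color of the edge joining them. Chaining these bounds along the
path gives `t - 1 ≤ (k + 1)(Δ - 1) + Σᵢ def(vᵢ) ≤ (diam G + 1)(Δ - 1) + def(G)`.
-/

lemma le_add_card_sub_one_add_setDef {S : Finset ℕ} {a b : ℕ} (ha : a ∈ S) (hb : b ∈ S) :
    b ≤ a + (S.card - 1) + setDef S := by
  have hS : S.Nonempty := ⟨a, ha⟩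
  have hmax : S.max.getD 0 = S.max' hS := by rw [← Finset.coe_max' hS]; rfl
  have hmin : S.min.getD 0 = S.min' hS := by rw [← Finset.coe_min' hS]; rfl
  have hb_le : b ≤ S.max' hS := S.le_max' b hb
  have hmin_le : S.min' hS ≤ a := S.min'_le a ha
  unfold setDef
  omega

section Spectrum

variable {V : Type*} [Fintype V] {G : SimpleGraph V} (c : Sym2 V → ℕ)

lemma mem_vSpectrum {v u : V} (h : G.Adj v u) : c s(v, u) ∈ vSpectrum G c v :=
  Finset.mem_image_of_mem _ (by simp [h])

lemma card_vSpectrum_le_maxDegree (v : V) : (vSpectrum G c v).card ≤ G.maxDegree :=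
  calc (vSpectrum G c v).card ≤ (Finset.univ.filter (G.Adj v)).card := Finset.card_image_le
    _ = G.degree v := by rw [SimpleGraph.degree, SimpleGraph.neighborFinset_eq_filter]
    _ ≤ G.maxDegree := G.degree_le_maxDegree v

lemma le_add_maxDegree_sub_one_add_setDef {v : V} {a b : ℕ} (ha : a ∈ vSpectrum G c v)
    (hb : b ∈ vSpectrum G c v) :
    b ≤ a + (G.maxDegree - 1) + setDef (vSpectrum G c v) := by
  have := le_add_card_sub_one_add_setDef ha hb
  have := card_vSpectrum_le_maxDegree (G := G) c v
  omega

lemma le_add_of_mem_vSpectrum_of_walk {x y : V} (p : G.Walk x y) {a b : ℕ}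
    (ha : a ∈ vSpectrum G c x) (hb : b ∈ vSpectrum G c y) :
    b ≤ a + (p.length + 1) * (G.maxDegree - 1)
      + (p.support.map fun v => setDef (vSpectrum G c v)).sum := by
  induction p generalizing a with
  | nil =>
    simpa using le_add_maxDegree_sub_one_add_setDef c ha hb
  | @cons x w y hxw p ih =>
    have hx : c s(x, w) ∈ vSpectrum G c x := mem_vSpectrum c hxw
    have hw : c s(x, w) ∈ vSpectrum G c w := Sym2.eq_swap ▸ mem_vSpectrum c hxw.symm
    have step := le_add_maxDegree_sub_one_add_setDef c ha hx
    have rest := ih hw hb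
    simp only [SimpleGraph.Walk.length_cons, SimpleGraph.Walk.support_cons, List.map_cons,
      List.sum_cons, add_mul (p.length + 1), one_mul]
    omega

lemma sum_setDef_support_le_colDef {x y : V} {p : G.Walk x y} (hp : p.IsPath) :
    (p.support.map fun v => setDef (vSpectrum G c v)).sum ≤ colDef G c := by
  rw [← List.sum_toFinset _ hp.support_nodup]
  exact Finset.sum_le_sum_of_subset (Finset.subset_univ _)

lemma le_add_colDef_of_connected (hG : G.Connected) {e e' : Sym2 V} (he : e ∈ G.edgeSet)
    (he' : e' ∈ G.edgeSet) :
    c e' ≤ c e + colDef G c + (G.diam + 1) * (G.maxDegree - 1) := by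
  induction e using Sym2.ind with | _ x x' =>
  induction e' using Sym2.ind with | _ y y' =>
  rw [SimpleGraph.mem_edgeSet] at he he'
  have hdiam : G.ediam ≠ ⊤ :=
    haveI := hG.nonempty; G.connected_iff_ediam_ne_top.mp hG
  obtain ⟨p, hp, hplen⟩ := hG.exists_path_of_dist x y
  have hlen : p.length ≤ G.diam := hplen ▸ SimpleGraph.dist_le_diam hdiam
  have walk := le_add_of_mem_vSpectrum_of_walk c p (mem_vSpectrum c he) (mem_vSpectrum c he')
  have hsum := sum_setDef_support_le_colDef c hp
  have := Nat.mul_le_mul_right (G.maxDegree - 1) (Nat.add_le_add_right hlen 1)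
  omega

end Spectrum

theorem stmt_6 {V : Type*} [Fintype V] (G : SimpleGraph V) (hG : G.Connected) :
    Wdef G ≤ 1 + graphDef G + (G.diam + 1) * (G.maxDegree - 1) := by
  refine csSup_le' ?_
  rintro t ⟨c, ⟨-, -, hall⟩, hdef⟩
  rcases Nat.eq_zero_or_pos t with rfl | ht
  · exact Nat.zero_le _
  obtain ⟨e₁, he₁, hc₁⟩ := hall 1 (Finset.mem_Icc.mpr ⟨le_rfl, ht⟩)
  obtain ⟨eₜ, heₜ, hcₜ⟩ := hall t (Finset.mem_Icc.mpr ⟨ht, le_rfl⟩)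
  have := le_add_colDef_of_connected c hG he₁ heₜ
  rw [hc₁, hcₜ, hdef] at this
  omega
end

section
/- For all m, n ≥ 1, the complete tripartite graph K_{1,m,n} satisfies def(K_{1,m,n}) = 0 if gcd(m+1, n+1) = 1, and def(K_{1,m,n}) = 1 otherwise. -/
open scoped Classical

/-- Index of the part containing a vertex of `K_{1,m,n}`. -/
def partIdx {m n : ℕ} : Unit ⊕ Fin m ⊕ Fin n → ℕ
  | Sum.inl _ => 0
  | Sum.inr (Sum.inl _) => 1
  | Sum.inr (Sum.inr _) => 2

/-- The complete tripartite graph `K_{1,m,n}`. -/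
def tripartiteK1 (m n : ℕ) : SimpleGraph (Unit ⊕ Fin m ⊕ Fin n) :=
  SimpleGraph.fromRel (fun a b => partIdx a ≠ partIdx b)

/-!
Write `a = inl ()`, `bᵢ = inr (inl i)` and `cⱼ = inr (inr j)`, and color `bᵢcⱼ` with `i + j + 1`.
Then `bᵢ` sees `[i + 1, i + n]` on its edges to the `cⱼ`, so the coloring is interval at `bᵢ` iff
`abᵢ` gets `i` or `i + n + 1`; likewise `acⱼ` must get `j` or `j + m + 1`. These pairs are the
edges `v — v + n + 1 (mod m + n + 2)` of an auxiliary graph on `{0, …, m + n}`. When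
`gcd (m + 1) (n + 1) = 1` the residue `n + 1` generates `ℤ/(m + n + 2)`, the auxiliary graph is a
path, and orienting every edge away from `0` chooses the colors injectively in `[1, m + n]`, so the
apex `a` is interval too. Choosing `i + n + 1` and `j` always leaves the single gap `n` at `a`.

Conversely, let `d ≥ 2` with `m + 1 = dp` and `n + 1 = dq`, and take an interval coloring. Each
residue class mod `d` occurs `q` times at every `bᵢ` and `p` times at every `cⱼ`. The interval
`[α, β)` at `a` has length `d(p + q) - 2`, so the class of `β` occurs `p + q - 1` times there.
Summing over all vertices counts the edges with color `≡ β` twice, yet the sum is `2dpq - 1`.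
-/

open Finset Function

theorem setDef_of_subset_Icc {S : Finset ℕ} {a b : ℕ} (ha : a ∈ S) (hb : b ∈ S)
    (hS : S ⊆ Icc a b) : setDef S = b - a - (#S - 1) := by
  have hmax : S.max = b :=
    le_antisymm (Finset.max_le fun x hx => WithBot.coe_le_coe.2 (mem_Icc.1 (hS hx)).2)
      (le_max hb)
  have hmin : S.min = a :=
    le_antisymm (min_le ha) (Finset.le_min fun x hx => WithTop.coe_le_coe.2 (mem_Icc.1 (hS hx)).1)
  rw [setDef, hmax, hmin]
  rfl

theorem setDef_Icc (a b : ℕ) : setDef (Icc a b) = 0 := by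
  rcases le_or_gt a b with hab | hab
  · rw [setDef_of_subset_Icc (left_mem_Icc.2 hab) (right_mem_Icc.2 hab) subset_rfl, Nat.card_Icc]
    omega
  · rw [Icc_eq_empty_of_lt hab]
    rfl

theorem exists_insert_Icc_eq_Icc {x a k : ℕ} (hx : x = a ∨ x = a + k + 1) :
    ∃ b, insert x (Icc (a + 1) (a + k)) = Icc b (b + k) := by
  rcases hx with rfl | rfl
  · exact ⟨x, insert_Icc_add_one_left_eq_Icc (by omega)⟩
  · refine ⟨a + 1, ?_⟩
    rw [insert_Icc_right_eq_Icc_add_one (by omega)]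
    ring_nf

theorem exists_eq_Ico_of_setDef_eq_zero {S : Finset ℕ} (h : setDef S = 0) :
    ∃ a, S = Ico a (a + #S) := by
  rcases S.eq_empty_or_nonempty with rfl | hne
  · exact ⟨0, rfl⟩
  have hS : S ⊆ Icc (S.min' hne) (S.max' hne) :=
    fun x hx => mem_Icc.2 ⟨min'_le S x hx, le_max' S x hx⟩
  rw [setDef_of_subset_Icc (min'_mem S hne) (max'_mem S hne) hS] at h
  have hle := card_le_card hS
  rw [Nat.card_Icc] at hle
  have hmin := min'_le S _ (max'_mem S hne)
  have hpos := hne.card_pos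
  refine ⟨S.min' hne, (eq_of_subset_of_card_le hS ?_).trans ?_⟩
  · rw [Nat.card_Icc]
    omega
  · ext x
    simp only [mem_Icc, mem_Ico]
    omega

section EdgeColoring

variable {V : Type*} {G : SimpleGraph V} {c : Sym2 V → ℕ}

theorem isProperEdgeColoring_iff_injOn :
    IsProperEdgeColoring G c ↔ ∀ v, Set.InjOn (fun w => c s(v, w)) {w | G.Adj v w} := by
  constructor
  · intro h v w hw w' hw' hc
    by_contra hne
    exact h s(v, w) hw s(v, w') hw' (by rwa [Ne, Sym2.congr_right]) ⟨v, by simp, by simp⟩ hc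
  · rintro h e he e' he' hne ⟨v, hv, hv'⟩ hc
    obtain ⟨w, rfl⟩ := Sym2.mem_iff_exists.1 hv
    obtain ⟨w', rfl⟩ := Sym2.mem_iff_exists.1 hv'
    exact hne (congrArg _ (h v he he' hc))

variable [Fintype V]

theorem isProperEdgeColoring_iff_card_vSpectrum :
    IsProperEdgeColoring G c ↔ ∀ v, #(vSpectrum G c v) = #{w | G.Adj v w} := by
  simp only [isProperEdgeColoring_iff_injOn, vSpectrum, card_image_iff, coe_filter, mem_univ,
    true_and]

theorem exists_vSpectrum_eq_Ico_of_colDef_eq_zero (hc : IsProperEdgeColoring G c)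
    (h : colDef G c = 0) (v : V) : ∃ a, vSpectrum G c v = Ico a (a + #{w | G.Adj v w}) := by
  rw [← isProperEdgeColoring_iff_card_vSpectrum.1 hc v]
  exact exists_eq_Ico_of_setDef_eq_zero (sum_eq_zero_iff.1 h v (mem_univ v))

/-- Handshake lemma for the edges whose color satisfies `P`. -/
theorem even_sum_card_filter_vSpectrum (hc : IsProperEdgeColoring G c) (P : ℕ → Prop)
    [DecidablePred P] : Even (∑ v, #{x ∈ vSpectrum G c v | P x}) := by
  let H := SimpleGraph.fromEdgeSet {e | e ∈ G.edgeSet ∧ P (c e)}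
  have hdeg : ∀ v, #{x ∈ vSpectrum G c v | P x} = H.degree v := by
    intro v
    rw [vSpectrum, filter_image, card_image_of_injOn, ← H.card_neighborFinset_eq_degree,
      H.neighborFinset_eq_filter, filter_filter]
    · congr 1
      ext w
      simp only [mem_filter, mem_univ, true_and, H, SimpleGraph.fromEdgeSet_adj]
      exact ⟨fun h => ⟨h, h.1.ne⟩, And.left⟩
    · exact (isProperEdgeColoring_iff_injOn.1 hc v).mono (by intro w; simp +contextual)
  simp_rw [hdeg, H.sum_degrees_eq_twice_card_edges]
  exact even_two_mul _

end EdgeColoring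

theorem card_filter_modEq_Ico_add_mul {d : ℕ} (hd : 0 < d) (a k v : ℕ) :
    #{x ∈ Ico a (a + d * k) | x ≡ v [MOD d]} = k := by
  have := Nat.Ico_filter_modEq_card a (a + d * k) hd v
  have hd' : (d : ℚ) ≠ 0 := by positivity
  rw [show (((a + d * k : ℕ) : ℚ) - v) / d = (a - v) / d + (k : ℕ) by
    push_cast; field_simp; ring, Int.ceil_add_natCast] at this
  omega

theorem card_filter_modEq_Ico_add_one_eq {d L k : ℕ} (hd : 2 ≤ d) (hL : L + 2 = d * k)
    (a : ℕ) : #{x ∈ Ico a (a + L) | x ≡ a + L [MOD d]} + 1 = k := by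
  have hnot : ¬ a + L + 1 ≡ a + L [MOD d] := fun h => by
    have := Nat.dvd_one.1 (Nat.modEq_zero_iff_dvd.1 (Nat.ModEq.add_left_cancel' (a + L) h))
    omega
  have hext : Ico a (a + d * k) = insert (a + L + 1) (insert (a + L) (Ico a (a + L))) := by
    ext x
    simp only [mem_insert, mem_Ico]
    omega
  have h := card_filter_modEq_Ico_add_mul (d := d) (by omega) a k (a + L)
  rwa [hext, filter_insert, if_neg hnot, filter_insert, if_pos (Nat.ModEq.refl _),
    card_insert_of_notMem (by simp)] at h

theorem exists_fin_add_add_one_eq_iff {k a x : ℕ} :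
    (∃ b : Fin k, a + b + 1 = x) ↔ a < x ∧ x ≤ a + k :=
  ⟨fun ⟨b, hb⟩ => by omega, fun h => ⟨⟨x - a - 1, by omega⟩, by simp only; omega⟩⟩

section GraphDeficiency

variable {V : Type*} [Fintype V] {G : SimpleGraph V}

theorem graphDef_eq_zero_of_intervalColorable (h : IntervalColorable G) : graphDef G = 0 :=
  Nat.sInf_eq_zero.2 (.inl h)

theorem graphDef_eq_one_of_not_intervalColorable
    (h1 : ∃ c, IsProperEdgeColoring G c ∧ colDef G c = 1) (h0 : ¬ IntervalColorable G) :
    graphDef G = 1 := by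
  obtain ⟨c, hc, hdef⟩ :=
    Nat.sInf_mem (s := {d | ∃ c, IsProperEdgeColoring G c ∧ colDef G c = d}) ⟨1, h1⟩
  have hle : graphDef G ≤ 1 := Nat.sInf_le h1
  have hne : graphDef G ≠ 0 := fun h => h0 ⟨c, hc, hdef.trans h⟩
  omega

end GraphDeficiency

theorem exists_injective_endpoint_ne {ι α : Type*} {tail head : ι → α} (htail : Injective tail)
    (hhead : Injective head) (pos : α → ℕ) (hpos : ∀ e, pos (head e) = pos (tail e) + 1)
    (r : α) : ∃ Z : ι → α, Injective Z ∧ (∀ e, Z e = tail e ∨ Z e = head e) ∧ ∀ e, Z e ≠ r := by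
  classical
  refine ⟨fun e => if pos (tail e) < pos r then tail e else head e, ?_, ?_, ?_⟩
  · intro e e' h
    dsimp only at h
    split_ifs at h with he he'
    · exact htail h
    · have := hpos e'
      rw [← h] at this
      omega
    · have := hpos e
      rw [h] at this
      omega
    · exact hhead h
  · intro e
    dsimp only
    split_ifs <;> simp
  · intro e
    dsimp only
    split_ifs with he
    · exact fun h => (h ▸ he).false
    · intro h
      have := hpos e
      rw [h] at this
      omega

theorem ZMod.val_add_one_of_add_one_ne_zero {M : ℕ} [NeZero M] {x : ZMod M}
    (hx : x + 1 ≠ 0) : (x + 1).val = x.val + 1 := by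
  have hM : 1 < M := by
    by_contra! hM
    obtain rfl : M = 1 := le_antisymm hM (Nat.pos_of_ne_zero (NeZero.ne M))
    exact hx (Subsingleton.elim _ _)
  rw [ZMod.val_add_of_lt] <;> rw [ZMod.val_one_eq_one_mod, Nat.one_mod_eq_one.2 hM.ne']
  refine lt_of_le_of_ne (ZMod.val_lt x) fun h => hx ?_
  rw [← ZMod.natCast_zmod_val x, ← Nat.cast_one, ← Nat.cast_add, h, ZMod.natCast_self]

/-- The discrete logarithm of `v + 1` to the base `n + 1` in `ZMod (m + n + 2)` works: both kinds
of steps add `n + 1`, and it wraps around only after `v = m`. -/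
theorem exists_potential_of_coprime {m n : ℕ} (h : Nat.Coprime (m + 1) (n + 1)) :
    ∃ pos : ℕ → ℕ,
      (∀ i < m, pos (i + n + 1) = pos i + 1) ∧ ∀ j < n, pos j = pos (j + m + 1) + 1 := by
  set M := m + n + 2 with hMdef
  have hu : Nat.Coprime (n + 1) M := by
    rw [hMdef, show m + n + 2 = m + 1 + (n + 1) by ring]
    exact Nat.coprime_add_self_right.2 h.symm
  have huu := ZMod.coe_mul_inv_eq_one _ hu
  have hM : ((m + n + 2 : ℕ) : ZMod M) = 0 := ZMod.natCast_self _
  push_cast at huu hM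
  let pos : ℕ → ℕ := fun v => (((v : ZMod M) + 1) * ((n : ZMod M) + 1)⁻¹).val
  have step (v w : ℕ) (hv : v < M) (hvm : v ≠ m) (hw : (w : ZMod M) = v + n + 1) :
      pos w = pos v + 1 := by
    have hx : ((w : ZMod M) + 1) * ((n : ZMod M) + 1)⁻¹ =
        ((v : ZMod M) + 1) * ((n : ZMod M) + 1)⁻¹ + 1 := by
      rw [hw]
      linear_combination huu
    simp only [pos]
    rw [hx, ZMod.val_add_one_of_add_one_ne_zero]
    intro h0
    have h1 : ((v + n + 2 : ℕ) : ZMod M) = 0 := by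
      push_cast
      linear_combination ((n : ZMod M) + 1) * h0 - ((v : ZMod M) + 1) * huu
    have := Nat.eq_of_dvd_of_lt_two_mul (by omega) ((ZMod.natCast_eq_zero_iff _ _).1 h1)
      (by omega)
    omega
  refine ⟨pos, fun i hi => step i _ (by omega) (by omega) (by push_cast; ring), fun j hj => ?_⟩
  refine step _ j (by omega) (by omega) ?_
  push_cast
  linear_combination -hM

section Tripartite

variable {m n : ℕ}

@[simp] theorem tripartiteK1_adj {u v : Unit ⊕ Fin m ⊕ Fin n} :
    (tripartiteK1 m n).Adj u v ↔ partIdx u ≠ partIdx v := by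
  rw [tripartiteK1, SimpleGraph.fromRel_adj]
  exact ⟨fun h => h.2.elim id Ne.symm, fun h => ⟨fun huv => h (congrArg partIdx huv), .inl h⟩⟩

theorem card_adj_tripartiteK1_inl : #{w | (tripartiteK1 m n).Adj (.inl ()) w} = m + n := by
  rw [card_filter, Fintype.sum_sum_type, Fintype.sum_sum_type]
  simp [partIdx]

theorem card_adj_tripartiteK1_inr_inl (i : Fin m) :
    #{w | (tripartiteK1 m n).Adj (.inr (.inl i)) w} = n + 1 := by
  rw [card_filter, Fintype.sum_sum_type, Fintype.sum_sum_type]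
  simp [partIdx, add_comm]

theorem card_adj_tripartiteK1_inr_inr (j : Fin n) :
    #{w | (tripartiteK1 m n).Adj (.inr (.inr j)) w} = m + 1 := by
  rw [card_filter, Fintype.sum_sum_type, Fintype.sum_sum_type]
  simp [partIdx, add_comm]

def tripartiteColoring (Z : Fin m ⊕ Fin n → ℕ) : Sym2 (Unit ⊕ Fin m ⊕ Fin n) → ℕ :=
  Sym2.lift ⟨fun u v => match u, v with
    | .inl _, .inr k | .inr k, .inl _ => Z k
    | .inr (.inl i), .inr (.inr j) | .inr (.inr j), .inr (.inl i) => i + j + 1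
    | _, _ => 0, by rintro (_ | _ | _) (_ | _ | _) <;> rfl⟩

def IsIntervalChoice (Z : Fin m ⊕ Fin n → ℕ) : Prop :=
  (∀ i : Fin m, Z (.inl i) = i ∨ Z (.inl i) = i + n + 1) ∧
    ∀ j : Fin n, Z (.inr j) = j ∨ Z (.inr j) = j + m + 1

variable (Z : Fin m ⊕ Fin n → ℕ)

theorem vSpectrum_tripartiteColoring_inl :
    vSpectrum (tripartiteK1 m n) (tripartiteColoring Z) (.inl ()) = univ.image Z := by
  ext x
  simp [vSpectrum, tripartiteColoring, Sum.exists, partIdx]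

theorem vSpectrum_tripartiteColoring_inr_inl (i : Fin m) :
    vSpectrum (tripartiteK1 m n) (tripartiteColoring Z) (.inr (.inl i)) =
      insert (Z (.inl i)) (Icc ((i : ℕ) + 1) (i + n)) := by
  ext x
  simp [vSpectrum, tripartiteColoring, Sum.exists, partIdx, exists_fin_add_add_one_eq_iff,
    eq_comm (a := Z (.inl i))]

theorem vSpectrum_tripartiteColoring_inr_inr (j : Fin n) :
    vSpectrum (tripartiteK1 m n) (tripartiteColoring Z) (.inr (.inr j)) =
      insert (Z (.inr j)) (Icc ((j : ℕ) + 1) (j + m)) := by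
  ext x
  simp [vSpectrum, tripartiteColoring, Sum.exists, partIdx, add_comm _ (j : ℕ),
    exists_fin_add_add_one_eq_iff, eq_comm (a := Z (.inr j))]

variable {Z : Fin m ⊕ Fin n → ℕ}

theorem IsIntervalChoice.exists_vSpectrum_inr_inl (hZ : IsIntervalChoice Z) (i : Fin m) :
    ∃ a, vSpectrum (tripartiteK1 m n) (tripartiteColoring Z) (.inr (.inl i)) = Icc a (a + n) := by
  rw [vSpectrum_tripartiteColoring_inr_inl]
  exact exists_insert_Icc_eq_Icc (hZ.1 i)

theorem IsIntervalChoice.exists_vSpectrum_inr_inr (hZ : IsIntervalChoice Z) (j : Fin n) :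
    ∃ a, vSpectrum (tripartiteK1 m n) (tripartiteColoring Z) (.inr (.inr j)) = Icc a (a + m) := by
  rw [vSpectrum_tripartiteColoring_inr_inr]
  exact exists_insert_Icc_eq_Icc (hZ.2 j)

theorem IsIntervalChoice.isProperEdgeColoring (hZ : IsIntervalChoice Z) (hinj : Injective Z) :
    IsProperEdgeColoring (tripartiteK1 m n) (tripartiteColoring Z) := by
  rw [isProperEdgeColoring_iff_card_vSpectrum]
  rintro (_ | i | j)
  · rw [vSpectrum_tripartiteColoring_inl, card_image_of_injective _ hinj, card_adj_tripartiteK1_inl]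
    simp
  · obtain ⟨a, ha⟩ := hZ.exists_vSpectrum_inr_inl i
    rw [ha, Nat.card_Icc, card_adj_tripartiteK1_inr_inl]
    omega
  · obtain ⟨a, ha⟩ := hZ.exists_vSpectrum_inr_inr j
    rw [ha, Nat.card_Icc, card_adj_tripartiteK1_inr_inr]
    omega

theorem IsIntervalChoice.colDef_eq (hZ : IsIntervalChoice Z) :
    colDef (tripartiteK1 m n) (tripartiteColoring Z) = setDef (univ.image Z) := by
  have hb i : setDef (vSpectrum (tripartiteK1 m n) (tripartiteColoring Z) (.inr (.inl i))) = 0 := by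
    obtain ⟨a, ha⟩ := hZ.exists_vSpectrum_inr_inl i
    rw [ha, setDef_Icc]
  have hc j : setDef (vSpectrum (tripartiteK1 m n) (tripartiteColoring Z) (.inr (.inr j))) = 0 := by
    obtain ⟨a, ha⟩ := hZ.exists_vSpectrum_inr_inr j
    rw [ha, setDef_Icc]
  simp [colDef, Fintype.sum_sum_type, hb, hc, vSpectrum_tripartiteColoring_inl]

theorem exists_colDef_tripartiteK1_eq_one (hm : 1 ≤ m) (hn : 1 ≤ n) :
    ∃ c, IsProperEdgeColoring (tripartiteK1 m n) c ∧ colDef (tripartiteK1 m n) c = 1 := by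
  let Z : Fin m ⊕ Fin n → ℕ := Sum.elim (fun i => i + n + 1) (fun j => j)
  have hZ : IsIntervalChoice Z := ⟨fun _ => .inr rfl, fun _ => .inl rfl⟩
  have hinj : Injective Z := Injective.sumElim (fun i i' h => Fin.ext (by omega))
    (fun j j' h => Fin.ext h) (fun i j => by omega)
  refine ⟨_, hZ.isProperEdgeColoring hinj, ?_⟩
  have h0 : 0 ∈ univ.image Z := mem_image.2 ⟨.inr ⟨0, hn⟩, mem_univ _, rfl⟩
  have htop : m + n ∈ univ.image Z :=
    mem_image.2 ⟨.inl ⟨m - 1, by omega⟩, mem_univ _, by dsimp only [Z, Sum.elim_inl]; omega⟩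
  have hsub : univ.image Z ⊆ Icc 0 (m + n) := by
    simp only [subset_iff, mem_image, mem_univ, true_and, mem_Icc, forall_exists_index]
    rintro _ (i | j) rfl <;> simp only [Z, Sum.elim_inl, Sum.elim_inr, zero_le, true_and] <;> omega
  rw [hZ.colDef_eq, setDef_of_subset_Icc h0 htop hsub, card_image_of_injective _ hinj, card_univ,
    Fintype.card_sum, Fintype.card_fin, Fintype.card_fin]
  omega

theorem intervalColorable_tripartiteK1 (h : Nat.Coprime (m + 1) (n + 1)) :
    IntervalColorable (tripartiteK1 m n) := by
  obtain ⟨pos, hposb, hposc⟩ := exists_potential_of_coprime h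
  let tail : Fin m ⊕ Fin n → ℕ := Sum.elim (fun i => i) (fun j => j + m + 1)
  let head : Fin m ⊕ Fin n → ℕ := Sum.elim (fun i => i + n + 1) (fun j => j)
  have htail : Injective tail := Injective.sumElim (fun i i' h => Fin.ext h)
    (fun j j' h => Fin.ext (by omega)) (fun i j => by omega)
  have hhead : Injective head := Injective.sumElim (fun i i' h => Fin.ext (by omega))
    (fun j j' h => Fin.ext h) (fun i j => by omega)
  obtain ⟨Z, hinj, hends, hne⟩ := exists_injective_endpoint_ne htail hhead pos
    (by rintro (i | j); exacts [hposb i i.2, hposc j j.2]) 0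
  have hZ : IsIntervalChoice Z := ⟨fun i => hends (.inl i), fun j => (hends (.inr j)).symm⟩
  refine ⟨_, hZ.isProperEdgeColoring hinj, ?_⟩
  have himage : univ.image Z = Icc 1 (m + n) := by
    refine eq_of_subset_of_card_le ?_ (by simp [card_image_of_injective _ hinj])
    simp only [subset_iff, mem_image, mem_univ, true_and, mem_Icc, forall_exists_index]
    rintro _ k rfl
    have h0 := hne k
    rcases k with i | j
    · rcases hends (.inl i) with h | h <;> simp only [tail, head, Sum.elim_inl] at h <;> omega
    · rcases hends (.inr j) with h | h <;> simp only [tail, head, Sum.elim_inr] at h <;> omega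
  rw [hZ.colDef_eq, himage, setDef_Icc]

theorem not_intervalColorable_tripartiteK1_of_dvd {d : ℕ} (hd : 2 ≤ d) (hm : d ∣ m + 1)
    (hn : d ∣ n + 1) : ¬ IntervalColorable (tripartiteK1 m n) := by
  rintro ⟨c, hproper, h0⟩
  obtain ⟨p, hp⟩ := hm
  obtain ⟨q, hq⟩ := hn
  have hIco := exists_vSpectrum_eq_Ico_of_colDef_eq_zero hproper h0
  obtain ⟨α, hα⟩ := hIco (.inl ())
  rw [card_adj_tripartiteK1_inl] at hα
  set β := α + (m + n)
  have hb i : #{x ∈ vSpectrum (tripartiteK1 m n) c (.inr (.inl i)) | x ≡ β [MOD d]} = q := by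
    obtain ⟨a, ha⟩ := hIco (.inr (.inl i))
    rw [ha, card_adj_tripartiteK1_inr_inl, hq, card_filter_modEq_Ico_add_mul (by omega)]
  have hc j : #{x ∈ vSpectrum (tripartiteK1 m n) c (.inr (.inr j)) | x ≡ β [MOD d]} = p := by
    obtain ⟨a, ha⟩ := hIco (.inr (.inr j))
    rw [ha, card_adj_tripartiteK1_inr_inr, hp, card_filter_modEq_Ico_add_mul (by omega)]
  have hapex : #{x ∈ vSpectrum (tripartiteK1 m n) c (.inl ()) | x ≡ β [MOD d]} + 1 = p + q := by
    rw [hα]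
    exact card_filter_modEq_Ico_add_one_eq hd (by rw [mul_add, ← hp, ← hq]; ring) α
  obtain ⟨k, hk⟩ := even_sum_card_filter_vSpectrum hproper (· ≡ β [MOD d])
  simp only [Fintype.sum_sum_type, Fintype.univ_unit, sum_singleton, hb, hc, sum_const, card_univ,
    Fintype.card_fin, smul_eq_mul] at hk
  have e1 : m * q + q = d * p * q := by rw [← add_one_mul, hp]
  have e2 : n * p + p = d * p * q := by rw [← add_one_mul, hq]; ring
  omega

theorem intervalColorable_tripartiteK1_iff :
    IntervalColorable (tripartiteK1 m n) ↔ Nat.Coprime (m + 1) (n + 1) := by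
  refine ⟨fun h => ?_, intervalColorable_tripartiteK1⟩
  by_contra hcop
  have hpos := Nat.gcd_pos_of_pos_left (n + 1) (by omega : 0 < m + 1)
  exact not_intervalColorable_tripartiteK1_of_dvd (by rw [Nat.Coprime] at hcop; omega)
    (Nat.gcd_dvd_left _ _) (Nat.gcd_dvd_right _ _) h

end Tripartite

theorem stmt_19_general (m n : ℕ) :
    graphDef (tripartiteK1 m n) = if Nat.gcd (m + 1) (n + 1) = 1 then 0 else 1 := by
  split_ifs with h
  · exact graphDef_eq_zero_of_intervalColorable (intervalColorable_tripartiteK1 h)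
  · have hm : 1 ≤ m := Nat.one_le_iff_ne_zero.2 fun hm => h (by simp [hm])
    have hn : 1 ≤ n := Nat.one_le_iff_ne_zero.2 fun hn => h (by simp [hn])
    exact graphDef_eq_one_of_not_intervalColorable (exists_colDef_tripartiteK1_eq_one hm hn)
      (mt intervalColorable_tripartiteK1_iff.1 h)

theorem stmt_19 (m n : ℕ) (hm : 1 ≤ m) (hn : 1 ≤ n) :
    graphDef (tripartiteK1 m n) = if Nat.gcd (m + 1) (n + 1) = 1 then 0 else 1 :=
  stmt_19_general m n
end
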